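/- Let k be a field and let Δ be a simplicial complex. Then Δ has a Cohen–Macaulay extender if and only if depth k[Δ] ≥ dim k[Δ] − 1. -/

import Mathlib

/-- A simplicial complex on vertex set `ℕ`: a finite collection of finite sets of
vertices (faces) closed under taking subsets. -/
def IsComplex (Δ : Finset (Finset ℕ)) : Prop :=
  ∀ σ ∈ Δ, ∀ τ ⊆ σ, τ ∈ Δ

/-- `P` has dimension `d`: it is nonempty and its largest face has cardinality `d + 1`. -/
def dimIs (P : Finset (Finset ℕ)) (d : ℤ) : Prop :=
  P.Nonempty ∧ ((P.sup Finset.card : ℕ) : ℤ) = d + 1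

/-- The link of the face `σ` in `Δ`:  `{τ ∈ Δ : σ ∪ τ ∈ Δ, σ ∩ τ = ∅}`. -/
def lkF (Δ : Finset (Finset ℕ)) (σ : Finset ℕ) : Finset (Finset ℕ) :=
  Δ.filter (fun τ => σ ∪ τ ∈ Δ ∧ σ ∩ τ = ∅)

/-- The space of simplicial `k`-chains of cardinality `c` supported on the set of faces
`Q`: the free `k`-vector space on the faces of `Q` of cardinality `c`.  (Taking `Q = Δ`,
with `∅ ∈ Δ`, gives the augmented chain complex computing reduced homology; taking
`Q = Γ \ Δ` gives the relative chain complex of the pair `(Γ, Δ)`.) -/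
abbrev Chains (k : Type) [Field k] (Q : Finset (Finset ℕ)) (c : ℤ) : Type :=
  {σ : Finset ℕ // σ ∈ Q ∧ (σ.card : ℤ) = c} → k

/-- The simplicial boundary operator from chains of cardinality `c + 1` to chains of
cardinality `c`, given on basis elements by `∂σ = ∑_{v ∈ σ} (-1)^{|{w ∈ σ : w < v}|} (σ∖v)`
(discarding any `σ∖v ∉ Q`); here expressed on coordinates. -/
def bdryFun (k : Type) [Field k] (Q : Finset (Finset ℕ)) (c : ℤ)
    (f : Chains k Q (c + 1)) : Chains k Q c := fun τ =>
  ∑ v ∈ (Q.sup id) \ τ.1,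
    if h : insert v τ.1 ∈ Q ∧ ((insert v τ.1).card : ℤ) = c + 1 then
      (-1 : k) ^ (τ.1.filter (· < v)).card * f ⟨insert v τ.1, h⟩
    else 0

/-- The boundary operator as a linear map. -/
def bdry (k : Type) [Field k] (Q : Finset (Finset ℕ)) (c : ℤ) :
    Chains k Q (c + 1) →ₗ[k] Chains k Q c where
  toFun := bdryFun k Q c
  map_add' f g := by
    funext τ
    simp only [bdryFun, Pi.add_apply]
    rw [← Finset.sum_add_distrib]
    refine Finset.sum_congr rfl fun v hv => ?_
    split
    · rw [mul_add]
    · rw [add_zero]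
  map_smul' a f := by
    funext τ
    simp only [bdryFun, Pi.smul_apply, smul_eq_mul, RingHom.id_apply, Finset.mul_sum]
    refine Finset.sum_congr rfl fun v hv => ?_
    split
    · ring
    · rw [mul_zero]

/-- The reduced simplicial homology in dimension `n` with coefficients in the field `k`
of the (relative) complex whose set of faces is `Q`:  cycles of cardinality `n + 1`
modulo boundaries.  For `Q = Δ` a complex (which contains the empty face `∅` whenever it
is nonempty) this is the reduced homology `H̃_n(Δ; k)`; for `Q = Γ \ Δ` it is the
relative homology `H̃_n(Γ, Δ; k)`. -/
abbrev redH (k : Type) [Field k] (Q : Finset (Finset ℕ)) (n : ℤ) : Type :=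
  LinearMap.ker (bdry k Q n) ⧸
    (LinearMap.range (bdry k Q (n + 1))).comap (LinearMap.ker (bdry k Q n)).subtype

/-- The `d`-dimensional complex `Γ` is Cohen–Macaulay over `k`: for every face
`σ ∈ Γ`, the reduced homology `H̃_i(lk_Γ(σ); k)` vanishes for all
`i ≠ d - dim σ - 1 = d - |σ|`. -/
def IsCM (k : Type) [Field k] (Γ : Finset (Finset ℕ)) (d : ℤ) : Prop :=
  ∀ σ ∈ Γ, ∀ i : ℤ, i ≠ d - (σ.card : ℤ) → Subsingleton (redH k (lkF Γ σ) i)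

/-- The relative complex `(Γ, Δ)`, with `dim Γ = d`, is relative Cohen–Macaulay over
`k`: for every face `σ` of `Γ`, the relative homology
`H̃_i(lk_Γ(σ), lk_Δ(σ); k)` vanishes except possibly when `|σ| + i = d`. -/
def RelCM (k : Type) [Field k] (Γ Δ : Finset (Finset ℕ)) (d : ℤ) : Prop :=
  ∀ σ ∈ Γ, ∀ i : ℤ, (σ.card : ℤ) + i ≠ d →
    Subsingleton (redH k (lkF Γ σ \ lkF Δ σ) i)

/-- `depth k[Δ] ≥ h`, via Hochster's formula (Reisner's criterion for depth):
`H̃_i(lk_Δ(σ); k) = 0` whenever `|σ| + i + 1 < h`. -/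
def DepthGE (k : Type) [Field k] (Δ : Finset (Finset ℕ)) (h : ℤ) : Prop :=
  ∀ σ ∈ Δ, ∀ i : ℤ, (σ.card : ℤ) + i + 1 < h → Subsingleton (redH k (lkF Δ σ) i)


section Infra

variable {k : Type} [Field k]

/-- Total extension of a chain to all finsets. -/
def tot {Q : Finset (Finset ℕ)} {c : ℤ} (f : Chains k Q c) : Finset ℕ → k :=
  fun s => if h : s ∈ Q ∧ ((s.card : ℕ) : ℤ) = c then f ⟨s, h⟩ else 0

lemma face_subset_sup {Q : Finset (Finset ℕ)} {σ : Finset ℕ} (h : σ ∈ Q) :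
    σ ⊆ Q.sup id := Finset.le_sup (f := id) h

lemma tot_eq_zero {Q : Finset (Finset ℕ)} {c : ℤ} (f : Chains k Q c) {s : Finset ℕ}
    (h : s ∉ Q) : tot f s = 0 := by
  unfold tot
  rw [dif_neg]
  tauto

/-- The boundary as a sum over any big enough vertex set, via `tot`. -/
lemma bdryFun_eq {Q : Finset (Finset ℕ)} {c : ℤ} {S : Finset ℕ} (hS : Q.sup id ⊆ S)
    (f : Chains k Q (c + 1)) (τ : {σ : Finset ℕ // σ ∈ Q ∧ ((σ.card : ℕ) : ℤ) = c}) :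
    bdryFun k Q c f τ = ∑ v ∈ S \ τ.1,
      (-1 : k) ^ (τ.1.filter (· < v)).card * tot f (insert v τ.1) := by
  unfold bdryFun
  have h1 : ∀ v ∈ Q.sup id \ τ.1,
      (if h : insert v τ.1 ∈ Q ∧ (((insert v τ.1).card : ℕ) : ℤ) = c + 1 then
        (-1 : k) ^ (τ.1.filter (· < v)).card * f ⟨insert v τ.1, h⟩ else 0)
      = (-1 : k) ^ (τ.1.filter (· < v)).card * tot f (insert v τ.1) := by
    intro v _
    unfold tot
    split
    · rfl
    · rw [mul_zero]
  rw [Finset.sum_congr rfl h1]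
  apply Finset.sum_subset (Finset.sdiff_subset_sdiff hS (le_refl _))
  intro v hv hv2
  have hvs : v ∉ Q.sup id := by
    simp only [Finset.mem_sdiff] at hv hv2
    tauto
  have : insert v τ.1 ∉ Q := by
    intro hmem
    exact hvs (face_subset_sup hmem (Finset.mem_insert_self v τ.1))
  rw [tot_eq_zero _ this, mul_zero]

lemma bdry_apply {Q : Finset (Finset ℕ)} {c : ℤ} (f : Chains k Q (c + 1))
    (τ : {σ : Finset ℕ // σ ∈ Q ∧ ((σ.card : ℕ) : ℤ) = c}) :
    bdry k Q c f τ = bdryFun k Q c f τ := rfl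

/-- Restriction of chains to a subcollection. -/
def resL {Q' Q : Finset (Finset ℕ)} (h : Q' ⊆ Q) (c : ℤ) :
    Chains k Q c →ₗ[k] Chains k Q' c where
  toFun f τ := f ⟨τ.1, h τ.2.1, τ.2.2⟩
  map_add' _ _ := rfl
  map_smul' _ _ := rfl

/-- Extension of chains by zero from a subcollection. -/
def extL {Q' Q : Finset (Finset ℕ)} (h : Q' ⊆ Q) (c : ℤ) :
    Chains k Q' c →ₗ[k] Chains k Q c where
  toFun f τ := if hh : τ.1 ∈ Q' then f ⟨τ.1, hh, τ.2.2⟩ else 0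
  map_add' f g := by
    funext τ
    by_cases hh : τ.1 ∈ Q' <;> simp [hh]
  map_smul' a f := by
    funext τ
    by_cases hh : τ.1 ∈ Q' <;> simp [hh]

lemma tot_ext {Q' Q : Finset (Finset ℕ)} (h : Q' ⊆ Q) (c : ℤ) (f : Chains k Q' c) :
    tot (extL h c f) = tot f := by
  funext s
  unfold tot extL
  simp only [LinearMap.coe_mk, AddHom.coe_mk]
  by_cases h1 : s ∈ Q' ∧ ((s.card : ℕ) : ℤ) = c
  · rw [dif_pos ⟨h h1.1, h1.2⟩, dif_pos h1, dif_pos h1.1]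
  · rw [dif_neg h1]
    by_cases h2 : s ∈ Q ∧ ((s.card : ℕ) : ℤ) = c
    · rw [dif_pos h2, dif_neg]
      tauto
    · rw [dif_neg h2]

end Infra

section DdZero

variable {k : Type} [Field k]

lemma filter_lt_insert_card (τ : Finset ℕ) (v w : ℕ) (hv : v ∉ τ) :
    ((insert v τ).filter (· < w)).card
      = (τ.filter (· < w)).card + (if v < w then 1 else 0) := by
  rw [Finset.filter_insert]
  by_cases h : v < w
  · rw [if_pos h, if_pos h, Finset.card_insert_of_notMem (fun hc => hv (Finset.mem_filter.1 hc).1)]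
  · rw [if_neg h, if_neg h, add_zero]

lemma sign_swap (τ : Finset ℕ) {v w : ℕ} (hv : v ∉ τ) (hw : w ∉ τ) (hvw : v ≠ w) :
    (-1 : k) ^ (τ.filter (· < v)).card * (-1) ^ ((insert v τ).filter (· < w)).card
      = -((-1 : k) ^ (τ.filter (· < w)).card * (-1) ^ ((insert w τ).filter (· < v)).card) := by
  rw [filter_lt_insert_card τ v w hv, filter_lt_insert_card τ w v hw]
  rcases lt_or_gt_of_ne hvw with h | h
  · rw [if_pos h, if_neg (by omega)]
    ring
  · rw [if_neg (by omega), if_pos h]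
    ring

/-- `∂ ∘ ∂ = 0` on chains over a subset-closed collection. -/
lemma bdry_bdry {Q : Finset (Finset ℕ)} (hQ : IsComplex Q) (c : ℤ)
    (f : Chains k Q (c + 1 + 1)) : bdry k Q c (bdry k Q (c + 1) f) = 0 := by
  funext τ
  rw [bdry_apply, bdryFun_eq (le_refl _)]
  set S := Q.sup id with hs
  have hcard : ∀ v, v ∉ τ.1 → ((((insert v τ.1).card : ℕ)) : ℤ) = c + 1 := by
    intro v hv
    rw [Finset.card_insert_of_notMem hv]
    push_cast
    rw [τ.2.2]
  have key : ∀ v ∈ S \ τ.1, tot (bdry k Q (c + 1) f) (insert v τ.1)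
      = ∑ w ∈ S \ insert v τ.1,
          (-1 : k) ^ ((insert v τ.1).filter (· < w)).card * tot f (insert w (insert v τ.1)) := by
    intro v hv
    have hv' : v ∉ τ.1 := (Finset.mem_sdiff.1 hv).2
    by_cases hm : insert v τ.1 ∈ Q
    · have hmem : insert v τ.1 ∈ Q ∧ (((insert v τ.1).card : ℕ) : ℤ) = c + 1 :=
        ⟨hm, hcard v hv'⟩
      have : tot (bdry k Q (c + 1) f) (insert v τ.1)
          = bdry k Q (c + 1) f ⟨insert v τ.1, hmem⟩ := by
        unfold tot
        rw [dif_pos hmem]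
      rw [this, bdry_apply, bdryFun_eq (le_refl _)]
    · rw [tot_eq_zero _ hm]
      symm
      apply Finset.sum_eq_zero
      intro w hw
      have : insert w (insert v τ.1) ∉ Q := by
        intro hc
        exact hm (hQ _ hc _ (Finset.subset_insert _ _))
      rw [tot_eq_zero _ this, mul_zero]
  rw [Finset.sum_congr rfl (fun v hv => by rw [key v hv])]
  have reidx : ∀ v : ℕ, S \ insert v τ.1 = (S \ τ.1).erase v := by
    intro v
    ext x
    simp only [Finset.mem_sdiff, Finset.mem_erase, Finset.mem_insert]
    tauto
  have step2 : ∀ v ∈ S \ τ.1,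
      (-1 : k) ^ (τ.1.filter (· < v)).card * ∑ w ∈ S \ insert v τ.1,
          (-1 : k) ^ ((insert v τ.1).filter (· < w)).card * tot f (insert w (insert v τ.1))
      = ∑ w ∈ S \ τ.1, (if w ≠ v then
          (-1 : k) ^ (τ.1.filter (· < v)).card *
            ((-1 : k) ^ ((insert v τ.1).filter (· < w)).card * tot f (insert w (insert v τ.1)))
          else 0) := by
    intro v hv
    rw [Finset.mul_sum, reidx v, ← Finset.filter_ne' (S \ τ.1) v, Finset.sum_filter]
  rw [Finset.sum_congr rfl step2, ← Finset.sum_product']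
  apply Finset.sum_involution (fun p _ => Prod.swap p)
  · intro p hp
    simp only [Finset.mem_product, Finset.mem_sdiff] at hp
    by_cases hpq : p.2 = p.1
    · rw [if_neg (by simpa using hpq), if_neg (by simp [hpq]), add_zero]
    · rw [if_pos hpq, if_pos (by simpa using (Ne.symm hpq) : (Prod.swap p).2 ≠ (Prod.swap p).1)]
      simp only [Prod.snd_swap, Prod.fst_swap]
      rw [Finset.insert_comm p.2 p.1 τ.1, ← mul_assoc, ← mul_assoc,
        sign_swap τ.1 hp.1.2 hp.2.2 (fun h => hpq (h.symm))]
      ring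
  · intro p hp hne
    intro hc
    apply hne
    have : p.2 = p.1 := by
      have := congrArg Prod.fst hc
      simpa using this
    rw [if_neg (by simpa using this)]
  · intro p hp
    simp only [Finset.mem_product] at hp ⊢
    exact ⟨hp.2, hp.1⟩
  · intro p hp
    exact Prod.swap_swap p

section Maps

variable {k : Type} [Field k]
variable {A B : Finset (Finset ℕ)}

lemma extL_apply_mem (hAB : A ⊆ B) (c : ℤ) (f : Chains k A c)
    (τ : {σ : Finset ℕ // σ ∈ B ∧ ((σ.card : ℕ) : ℤ) = c}) (h : τ.1 ∈ A) :
    extL hAB c f τ = f ⟨τ.1, h, τ.2.2⟩ := by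
  unfold extL
  simp only [LinearMap.coe_mk, AddHom.coe_mk]
  rw [dif_pos h]

lemma extL_apply_not_mem (hAB : A ⊆ B) (c : ℤ) (f : Chains k A c)
    (τ : {σ : Finset ℕ // σ ∈ B ∧ ((σ.card : ℕ) : ℤ) = c}) (h : τ.1 ∉ A) :
    extL hAB c f τ = 0 := by
  unfold extL
  simp only [LinearMap.coe_mk, AddHom.coe_mk]
  rw [dif_neg h]

lemma resL_apply (hAB : A ⊆ B) (c : ℤ) (f : Chains k B c)
    (τ : {σ : Finset ℕ // σ ∈ A ∧ ((σ.card : ℕ) : ℤ) = c}) :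
    resL hAB c f τ = f ⟨τ.1, hAB τ.2.1, τ.2.2⟩ := rfl

/-- (a) extension commutes with the boundary, for a subset-closed subcollection. -/
lemma ext_bdry (hAB : A ⊆ B) (hA : IsComplex A) (c : ℤ) (f : Chains k A (c + 1)) :
    extL hAB c (bdry k A c f) = bdry k B c (extL hAB (c + 1) f) := by
  funext τ
  rw [bdry_apply, bdryFun_eq (le_refl _), Finset.sum_congr rfl
    (fun v _ => by rw [tot_ext hAB (c+1) f])]
  by_cases h : τ.1 ∈ A
  · rw [extL_apply_mem hAB c _ τ h, bdry_apply, bdryFun_eq (Finset.sup_mono hAB)]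
  · rw [extL_apply_not_mem hAB c _ τ h]
    symm
    apply Finset.sum_eq_zero
    intro v _
    have : insert v τ.1 ∉ A := fun hc => h (hA _ hc _ (Finset.subset_insert _ _))
    rw [tot_eq_zero _ this, mul_zero]

/-- (b) the boundary on `B \ A` is induced by the boundary on `B`. -/
lemma bdry_sdiff (c : ℤ) (f : Chains k (B \ A) (c + 1)) :
    bdry k (B \ A) c f
      = resL Finset.sdiff_subset c (bdry k B c (extL Finset.sdiff_subset (c + 1) f)) := by
  funext τ
  rw [bdry_apply, bdryFun_eq (Finset.sup_mono Finset.sdiff_subset), resL_apply, bdry_apply,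
    bdryFun_eq (le_refl _), tot_ext Finset.sdiff_subset (c+1) f]

/-- (c) the relative part of the boundary of a chain on a subset-closed
subcollection vanishes. -/
lemma res_bdry_ext (hAB : A ⊆ B) (hA : IsComplex A) (c : ℤ) (f : Chains k A (c + 1)) :
    resL (Finset.sdiff_subset : B \ A ⊆ B) c (bdry k B c (extL hAB (c + 1) f)) = 0 := by
  funext τ
  rw [resL_apply, bdry_apply, bdryFun_eq (le_refl _), Finset.sum_congr rfl
    (fun v _ => by rw [tot_ext hAB (c+1) f])]
  apply Finset.sum_eq_zero
  intro v _
  have hτA : τ.1 ∉ A := (Finset.mem_sdiff.1 τ.2.1).2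
  have : insert v τ.1 ∉ A := fun hc => hτA (hA _ hc _ (Finset.subset_insert _ _))
  rw [tot_eq_zero _ this, mul_zero]

/-- (d) decomposition of a chain on `B` into its `B \ A` part and its `A` part. -/
lemma chain_decomp (hAB : A ⊆ B) (c : ℤ) (g : Chains k B c) :
    g = extL (Finset.sdiff_subset : B \ A ⊆ B) c (resL Finset.sdiff_subset c g)
        + extL hAB c (resL hAB c g) := by
  funext τ
  by_cases h : τ.1 ∈ A
  · have h2 : τ.1 ∉ B \ A := fun hc => (Finset.mem_sdiff.1 hc).2 h
    rw [Pi.add_apply, extL_apply_not_mem _ _ _ _ h2, extL_apply_mem _ _ _ _ h, resL_apply,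
      zero_add]
  · have h2 : τ.1 ∈ B \ A := Finset.mem_sdiff.2 ⟨τ.2.1, h⟩
    rw [Pi.add_apply, extL_apply_mem _ _ _ _ h2, extL_apply_not_mem _ _ _ _ h, resL_apply,
      add_zero]

/-- (e) restriction of an extension. -/
lemma res_ext (hAB : A ⊆ B) (c : ℤ) (f : Chains k A c) :
    resL hAB c (extL hAB c f) = f := by
  funext τ
  exact extL_apply_mem hAB c f ⟨τ.1, hAB τ.2.1, τ.2.2⟩ τ.2.1

/-- (f) the `B \ A` restriction of an `A`-extension vanishes. -/
lemma resR_extA (hAB : A ⊆ B) (c : ℤ) (f : Chains k A c) :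
    resL (Finset.sdiff_subset : B \ A ⊆ B) c (extL hAB c f) = 0 := by
  funext τ
  exact extL_apply_not_mem hAB c f ⟨τ.1, Finset.sdiff_subset τ.2.1, τ.2.2⟩
    (Finset.mem_sdiff.1 τ.2.1).2

lemma extL_inj (hAB : A ⊆ B) (c : ℤ) {f g : Chains k A c}
    (h : extL hAB c f = extL hAB c g) : f = g := by
  have := congrArg (resL hAB c) h
  rwa [res_ext, res_ext] at this

/-- Vanishing of `redH` in concrete terms. -/
lemma vanish_iff (Q : Finset (Finset ℕ)) (n : ℤ) :
    Subsingleton (redH k Q n) ↔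
      ∀ z : Chains k Q (n + 1), bdry k Q n z = 0 → ∃ w, bdry k Q (n + 1) w = z := by
  rw [Submodule.Quotient.subsingleton_iff]
  constructor
  · intro h z hz
    have hm : (⟨z, LinearMap.mem_ker.2 hz⟩ : LinearMap.ker (bdry k Q n)) ∈
        (LinearMap.range (bdry k Q (n + 1))).comap (LinearMap.ker (bdry k Q n)).subtype := by
      rw [h]
      trivial
    simpa [Submodule.mem_comap, LinearMap.mem_range] using hm
  · intro h
    rw [Submodule.eq_top_iff']
    intro x
    simp only [Submodule.mem_comap, Submodule.subtype_apply, LinearMap.mem_range]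
    exact h x.1 (LinearMap.mem_ker.1 x.2)

/-- Vanishing when there are no faces of cardinality `n + 1`. -/
lemma vanish_of_no_faces (Q : Finset (Finset ℕ)) (n : ℤ)
    (h : ∀ σ ∈ Q, ((σ.card : ℕ) : ℤ) ≠ n + 1) : Subsingleton (redH k Q n) := by
  rw [vanish_iff]
  intro z _
  exact ⟨0, funext fun τ => absurd τ.2.2 (h _ τ.2.1)⟩

end Maps

section Fragments

variable {k : Type} [Field k]
variable {A B : Finset (Finset ℕ)}

lemma vanish_shift {Q : Finset (Finset ℕ)} {n n' : ℤ} (h : n = n')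
    (hv : Subsingleton (redH k Q n)) : Subsingleton (redH k Q n') := by
  subst h
  exact hv

/-- Exactness fragment `H_{i+1}(B,A) → H_i(A) → H_i(B)`:
if both outer groups vanish, so does the middle one. -/
lemma fragment_I (hAB : A ⊆ B) (hA : IsComplex A) (hB : IsComplex B) (i : ℤ)
    (hBv : Subsingleton (redH k B i))
    (hRv : Subsingleton (redH k (B \ A) (i + 1))) :
    Subsingleton (redH k A i) := by
  rw [vanish_iff] at hBv hRv ⊢
  intro z hz
  obtain ⟨w, hw⟩ := hBv (extL hAB (i + 1) z)
    (by rw [← ext_bdry hAB hA i z, hz, map_zero])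
  -- the relative part of w is a relative cycle
  have hcyc : bdry k (B \ A) (i + 1) (resL Finset.sdiff_subset (i + 1 + 1) w) = 0 := by
    have hrep : extL (Finset.sdiff_subset : B \ A ⊆ B) (i + 1 + 1)
          (resL Finset.sdiff_subset (i + 1 + 1) w)
        = w - extL hAB (i + 1 + 1) (resL hAB (i + 1 + 1) w) := by
      rw [eq_sub_iff_add_eq]
      exact (chain_decomp hAB (i + 1 + 1) w).symm
    rw [bdry_sdiff, hrep, map_sub, map_sub, hw,
      res_bdry_ext hAB hA (i + 1) (resL hAB (i + 1 + 1) w),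
      resR_extA hAB (i + 1) z, sub_zero]
  obtain ⟨u, hu⟩ := hRv (resL Finset.sdiff_subset (i + 1 + 1) w) hcyc
  set w' : Chains k B (i + 1 + 1) :=
    w - bdry k B (i + 1 + 1) (extL Finset.sdiff_subset (i + 1 + 1 + 1) u) with hw'
  have hbw' : bdry k B (i + 1) w' = extL hAB (i + 1) z := by
    rw [hw', map_sub, hw, bdry_bdry hB (i + 1)
      (extL Finset.sdiff_subset (i + 1 + 1 + 1) u), sub_zero]
  have hπw' : resL (Finset.sdiff_subset : B \ A ⊆ B) (i + 1 + 1) w' = 0 := by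
    rw [hw', map_sub, ← bdry_sdiff, hu, sub_self]
  have hrep' : w' = extL hAB (i + 1 + 1) (resL hAB (i + 1 + 1) w') := by
    have := chain_decomp hAB (i + 1 + 1) w'
    rw [hπw', map_zero, zero_add] at this
    exact this
  refine ⟨resL hAB (i + 1 + 1) w', extL_inj hAB (i + 1) ?_⟩
  rw [ext_bdry hAB hA (i + 1) (resL hAB (i + 1 + 1) w'), ← hrep', hbw']

/-- Exactness fragment `H_{i+1}(B) → H_{i+1}(B,A) → H_i(A)`:
if both outer groups vanish, so does the middle one. -/
lemma fragment_II (hAB : A ⊆ B) (hA : IsComplex A) (hB : IsComplex B) (i : ℤ)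
    (hBv : Subsingleton (redH k B (i + 1)))
    (hAv : Subsingleton (redH k A i)) :
    Subsingleton (redH k (B \ A) (i + 1)) := by
  rw [vanish_iff] at hBv hAv ⊢
  intro z hz
  set a : Chains k A (i + 1) :=
    resL hAB (i + 1) (bdry k B (i + 1) (extL Finset.sdiff_subset (i + 1 + 1) z)) with ha
  have hea : extL hAB (i + 1) a
      = bdry k B (i + 1) (extL Finset.sdiff_subset (i + 1 + 1) z) := by
    have hdec := chain_decomp hAB (i + 1)
      (bdry k B (i + 1) (extL Finset.sdiff_subset (i + 1 + 1) z))
    have hrel : resL (Finset.sdiff_subset : B \ A ⊆ B) (i + 1)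
        (bdry k B (i + 1) (extL Finset.sdiff_subset (i + 1 + 1) z)) = 0 := by
      rw [← bdry_sdiff, hz]
    rw [hrel, map_zero, zero_add] at hdec
    exact hdec.symm
  have hacyc : bdry k A i a = 0 := by
    apply extL_inj hAB i
    rw [ext_bdry hAB hA i a, hea, bdry_bdry hB i, map_zero]
  obtain ⟨u, hu⟩ := hAv a hacyc
  have hccyc : bdry k B (i + 1)
      (extL Finset.sdiff_subset (i + 1 + 1) z - extL hAB (i + 1 + 1) u) = 0 := by
    rw [map_sub, ← hea, ← ext_bdry hAB hA (i + 1) u, hu, sub_self]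
  obtain ⟨w, hw⟩ := hBv _ hccyc
  refine ⟨resL Finset.sdiff_subset (i + 1 + 1 + 1) w, ?_⟩
  have hz' : z = resL (Finset.sdiff_subset : B \ A ⊆ B) (i + 1 + 1)
      (extL Finset.sdiff_subset (i + 1 + 1) z - extL hAB (i + 1 + 1) u) := by
    rw [map_sub, res_ext, resR_extA hAB (i + 1 + 1) u, sub_zero]
  rw [hz', ← hw]
  have hdecw := chain_decomp hAB (i + 1 + 1 + 1) w
  calc bdry k (B \ A) (i + 1 + 1) (resL Finset.sdiff_subset (i + 1 + 1 + 1) w)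
      = resL Finset.sdiff_subset (i + 1 + 1) (bdry k B (i + 1 + 1)
          (extL Finset.sdiff_subset (i + 1 + 1 + 1)
            (resL Finset.sdiff_subset (i + 1 + 1 + 1) w))) := by rw [← bdry_sdiff]
    _ = resL Finset.sdiff_subset (i + 1 + 1) (bdry k B (i + 1 + 1) w) := by
          nth_rewrite 2 [hdecw]
          rw [map_add, map_add, res_bdry_ext hAB hA (i + 1 + 1)
            (resL hAB (i + 1 + 1 + 1) w), add_zero]

end Fragments

section Links

variable {k : Type} [Field k]

lemma lk_complex {Δ : Finset (Finset ℕ)} (hΔ : IsComplex Δ) (σ : Finset ℕ) :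
    IsComplex (lkF Δ σ) := by
  intro τ hτ ρ hρ
  rw [lkF, Finset.mem_filter] at hτ ⊢
  obtain ⟨h1, h2, h3⟩ := hτ
  refine ⟨hΔ _ h1 _ hρ, hΔ _ h2 _ (Finset.union_subset_union (le_refl _) hρ), ?_⟩
  have : σ ∩ ρ ⊆ σ ∩ τ := Finset.inter_subset_inter (le_refl _) hρ
  rw [h3] at this
  exact Finset.subset_empty.1 this

lemma lk_mono {Δ Γ : Finset (Finset ℕ)} (h : Δ ⊆ Γ) (σ : Finset ℕ) :
    lkF Δ σ ⊆ lkF Γ σ := by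
  intro τ hτ
  rw [lkF, Finset.mem_filter] at hτ ⊢
  exact ⟨h hτ.1, h hτ.2.1, hτ.2.2⟩

lemma lk_empty {Δ : Finset (Finset ℕ)} (hΔ : IsComplex Δ) {σ : Finset ℕ} (h : σ ∉ Δ) :
    lkF Δ σ = ∅ := by
  rw [Finset.eq_empty_iff_forall_notMem]
  intro τ hτ
  rw [lkF, Finset.mem_filter] at hτ
  exact h (hΔ _ hτ.2.1 _ Finset.subset_union_left)

/-- Forward direction: a CM extender forces the depth bound. -/
lemma forward_dir {Δ Γ : Finset (Finset ℕ)} {d : ℤ} (hΔ : IsComplex Δ)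
    (hΓ : IsComplex Γ) (hsub : Δ ⊆ Γ) (hCM : IsCM k Γ d) (hrel : RelCM k Γ Δ d) :
    DepthGE k Δ d := by
  intro σ hσ i hi
  exact fragment_I (lk_mono hsub σ) (lk_complex hΔ σ) (lk_complex hΓ σ) i
    (hCM σ (hsub hσ) i (by omega))
    (hrel σ (hsub hσ) (i + 1) (by omega))

end Links

section Skeleton

variable {k : Type} [Field k]

/-- The collection of all subsets of `V` of cardinality at most `m`. -/
def Sk (V : Finset ℕ) (m : ℕ) : Finset (Finset ℕ) :=
  V.powerset.filter (fun s => s.card ≤ m)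

lemma mem_Sk {V : Finset ℕ} {m : ℕ} {s : Finset ℕ} :
    s ∈ Sk V m ↔ s ⊆ V ∧ s.card ≤ m := by
  rw [Sk, Finset.mem_filter, Finset.mem_powerset]

lemma Sk_complex (V : Finset ℕ) (m : ℕ) : IsComplex (Sk V m) := by
  intro σ hσ τ hτ
  rw [mem_Sk] at hσ ⊢
  exact ⟨hτ.trans hσ.1, (Finset.card_le_card hτ).trans hσ.2⟩

lemma Sk_sup {V : Finset ℕ} {m : ℕ} (hm : 1 ≤ m) : (Sk V m).sup id = V := by
  apply subset_antisymm
  · exact Finset.sup_le (fun s hs => (mem_Sk.1 hs).1)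
  · intro v hv
    have h1 : {v} ∈ Sk V m := mem_Sk.2 ⟨Finset.singleton_subset_iff.2 hv, by simpa using hm⟩
    exact face_subset_sup h1 (Finset.mem_singleton_self v)

/-- Contractibility of the skeleton below the top dimension (cone at the minimal
vertex). -/
lemma Sk_vanish {V : Finset ℕ} {m : ℕ} (hV : V.Nonempty) (n : ℤ)
    (hn : n + 1 + 1 ≤ (m : ℤ)) : Subsingleton (redH k (Sk V m) n) := by
  by_cases hn0 : n + 1 < 0
  · exact vanish_of_no_faces _ _ (fun σ _ => by omega)
  push_neg at hn0
  have hm1 : 1 ≤ m := by omega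
  set v0 := V.min' hV with hv0def
  have hv0V : v0 ∈ V := V.min'_mem hV
  rw [vanish_iff]
  intro z hz
  set w : Chains k (Sk V m) (n + 1 + 1) :=
    (fun τ => if v0 ∈ τ.1 then tot z (τ.1.erase v0) else 0) with hwdef
  have tot_w_mem : ∀ s : Finset ℕ, (h : s ∈ Sk V m ∧ ((s.card : ℕ) : ℤ) = n + 1 + 1) →
      tot w s = if v0 ∈ s then tot z (s.erase v0) else 0 := by
    intro s h
    have h2 : tot w s = w ⟨s, h⟩ := dif_pos h
    rw [h2, hwdef]
  have tot_w_nm : ∀ s : Finset ℕ, ¬(s ∈ Sk V m ∧ ((s.card : ℕ) : ℤ) = n + 1 + 1) →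
      tot w s = 0 := by
    intro s h
    unfold tot
    rw [dif_neg h]
  refine ⟨w, ?_⟩
  funext τ
  have hτV : τ.1 ⊆ V := (mem_Sk.1 τ.2.1).1
  have hτc : ((τ.1.card : ℕ) : ℤ) = n + 1 := τ.2.2
  rw [bdry_apply, bdryFun_eq (le_of_eq (Sk_sup hm1))]
  by_cases hv0τ : v0 ∈ τ.1
  · -- τ contains the cone point: use the cycle condition at τ \ v0
    set ρ : Finset ℕ := τ.1.erase v0 with hρdef
    have hρmem : ρ ∈ Sk V m ∧ ((ρ.card : ℕ) : ℤ) = n := by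
      constructor
      · exact mem_Sk.2 ⟨(Finset.erase_subset _ _).trans hτV,
          (Finset.card_le_card (Finset.erase_subset _ _)).trans (mem_Sk.1 τ.2.1).2⟩
      · rw [Finset.card_erase_of_mem hv0τ]
        have : 1 ≤ τ.1.card := Finset.card_pos.2 ⟨v0, hv0τ⟩
        omega
    have hv0ρ : v0 ∉ ρ := Finset.notMem_erase _ _
    have h0 := congrFun hz ⟨ρ, hρmem⟩
    rw [bdry_apply, bdryFun_eq (le_of_eq (Sk_sup hm1))] at h0
    simp only [Pi.zero_apply] at h0
    have hVρ : V \ ρ = insert v0 (V \ τ.1) := by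
      ext x
      simp only [hρdef, Finset.mem_sdiff, Finset.mem_erase, Finset.mem_insert]
      by_cases hx : x = v0 <;> simp [hx, hv0V] <;> tauto
    rw [hVρ, Finset.sum_insert (by simp [hv0τ])] at h0
    have hfil : ρ.filter (· < v0) = ∅ :=
      Finset.filter_eq_empty_iff.2 (fun x hx => not_lt.2 (V.min'_le x
        ((Finset.erase_subset _ _).trans hτV hx)))
    have htotρ : tot z (insert v0 ρ) = z τ := by
      rw [hρdef, Finset.insert_erase hv0τ]
      exact dif_pos τ.2
    rw [hfil, Finset.card_empty, pow_zero, one_mul, htotρ] at h0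
    have hterm : ∀ v ∈ V \ τ.1,
        (-1 : k) ^ (τ.1.filter (· < v)).card * tot w (insert v τ.1)
          = -((-1 : k) ^ (ρ.filter (· < v)).card * tot z (insert v ρ)) := by
      intro v hv
      rw [Finset.mem_sdiff] at hv
      have hvv0 : v0 < v := lt_of_le_of_ne (V.min'_le v hv.1)
        (fun h => hv.2 (by rw [← h]; exact hv0τ))
      have hins : insert v τ.1 ∈ Sk V m ∧ (((insert v τ.1).card : ℕ) : ℤ) = n + 1 + 1 := by
        constructor
        · refine mem_Sk.2 ⟨Finset.insert_subset hv.1 hτV, ?_⟩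
          rw [Finset.card_insert_of_notMem hv.2]
          omega
        · rw [Finset.card_insert_of_notMem hv.2]
          push_cast
          omega
      rw [tot_w_mem _ hins, if_pos (Finset.mem_insert_of_mem hv0τ),
        Finset.erase_insert_of_ne (fun h => hv.2 (by rw [h]; exact hv0τ)), ← hρdef]
      have hτρ : τ.1 = insert v0 ρ := (Finset.insert_erase hv0τ).symm
      have hfilτ : τ.1.filter (· < v) = insert v0 (ρ.filter (· < v)) := by
        rw [hτρ, Finset.filter_insert, if_pos hvv0]
      rw [hfilτ, Finset.card_insert_of_notMem (fun h => hv0ρ (Finset.mem_filter.1 h).1),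
        pow_succ]
      ring
    rw [Finset.sum_congr rfl hterm, Finset.sum_neg_distrib]
    exact (eq_neg_of_add_eq_zero_left h0).symm
  · -- τ does not contain the cone point: only the v0 term survives
    rw [Finset.sum_eq_single_of_mem v0 (Finset.mem_sdiff.2 ⟨hv0V, hv0τ⟩)]
    · have hins : insert v0 τ.1 ∈ Sk V m ∧ (((insert v0 τ.1).card : ℕ) : ℤ) = n + 1 + 1 := by
        constructor
        · refine mem_Sk.2 ⟨Finset.insert_subset hv0V hτV, ?_⟩
          rw [Finset.card_insert_of_notMem hv0τ]
          omega
        · rw [Finset.card_insert_of_notMem hv0τ]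
          push_cast
          omega
      have hfil : τ.1.filter (· < v0) = ∅ :=
        Finset.filter_eq_empty_iff.2 (fun x hx => not_lt.2 (V.min'_le x (hτV hx)))
      rw [tot_w_mem _ hins, if_pos (Finset.mem_insert_self _ _), Finset.erase_insert hv0τ,
        hfil, Finset.card_empty, pow_zero, one_mul]
      exact dif_pos τ.2
    · intro v hv hne
      have hv0iv : v0 ∉ insert v τ.1 := by
        rw [Finset.mem_insert]
        push_neg
        exact ⟨fun h => hne h.symm, hv0τ⟩
      by_cases hc : insert v τ.1 ∈ Sk V m ∧ (((insert v τ.1).card : ℕ) : ℤ) = n + 1 + 1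
      · rw [tot_w_mem _ hc, if_neg hv0iv, mul_zero]
      · rw [tot_w_nm _ hc, mul_zero]

end Skeleton

section Backward

variable {k : Type} [Field k]

lemma lk_Sk {V : Finset ℕ} {m : ℕ} {σ : Finset ℕ} (hσ : σ ∈ Sk V m) :
    lkF (Sk V m) σ = Sk (V \ σ) (m - σ.card) := by
  obtain ⟨hσV, hσc⟩ := mem_Sk.1 hσ
  ext τ
  rw [lkF, Finset.mem_filter, mem_Sk, mem_Sk, mem_Sk]
  constructor
  · rintro ⟨⟨hτV, hτc⟩, ⟨hunV, hunc⟩, hint⟩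
    have hdisj : Disjoint σ τ := Finset.disjoint_iff_inter_eq_empty.2 hint
    have hcard : (σ ∪ τ).card = σ.card + τ.card := Finset.card_union_of_disjoint hdisj
    exact ⟨Finset.subset_sdiff.2 ⟨hτV, hdisj.symm⟩, by omega⟩
  · rintro ⟨hτ, hτc⟩
    rw [Finset.subset_sdiff] at hτ
    have hdisj : Disjoint σ τ := hτ.2.symm
    have hcard : (σ ∪ τ).card = σ.card + τ.card := Finset.card_union_of_disjoint hdisj
    refine ⟨⟨hτ.1, by omega⟩, ⟨Finset.union_subset hσV hτ.1, by omega⟩,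
      Finset.disjoint_iff_inter_eq_empty.1 hdisj⟩

lemma Sk_CM {Δ : Finset (Finset ℕ)} {d : ℤ} (hne : Δ.Nonempty)
    (hsup : ((Δ.sup Finset.card : ℕ) : ℤ) = d + 1)
    (hV : Δ.sup Finset.card ≤ (Δ.sup id).card) :
    IsCM k (Sk (Δ.sup id) (Δ.sup Finset.card)) d := by
  set m := Δ.sup Finset.card with hm
  set V := Δ.sup id with hVdef
  intro σ hσ i hi
  rw [lk_Sk hσ]
  obtain ⟨hσV, hσc⟩ := mem_Sk.1 hσ
  have hmc : ((m - σ.card : ℕ) : ℤ) = (m : ℤ) - σ.card := Nat.cast_sub hσc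
  by_cases hlt : i + 1 + 1 ≤ ((m - σ.card : ℕ) : ℤ)
  · by_cases hneg : i + 1 < 0
    · exact vanish_of_no_faces _ _ (fun s _ => by omega)
    · have hVne : (V \ σ).Nonempty := by
        apply Finset.card_pos.1
        rw [Finset.card_sdiff_of_subset hσV]
        omega
      exact Sk_vanish hVne i hlt
  · apply vanish_of_no_faces
    intro s hs
    have h2 := (mem_Sk.1 hs).2
    omega

/-- Backward direction: the depth bound yields a CM extender (the full skeleton). -/
lemma backward_dir {Δ : Finset (Finset ℕ)} {d : ℤ} (hΔ : IsComplex Δ)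
    (hdim : dimIs Δ d) (hdep : DepthGE k Δ d) :
    ∃ Γ : Finset (Finset ℕ), IsComplex Γ ∧ dimIs Γ d ∧ Δ ⊆ Γ ∧
      IsCM k Γ d ∧ RelCM k Γ Δ d := by
  obtain ⟨hne, hsup⟩ := hdim
  set m := Δ.sup Finset.card with hm
  set V := Δ.sup id with hVdef
  obtain ⟨F, hF, hFc⟩ := Finset.exists_mem_eq_sup Δ hne Finset.card
  have hΔΓ : Δ ⊆ Sk V m := by
    intro σ hσ
    exact mem_Sk.2 ⟨face_subset_sup hσ, Finset.le_sup (f := Finset.card) hσ⟩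
  have hVcard : m ≤ V.card := by
    calc m = F.card := hm.trans hFc
      _ ≤ V.card := Finset.card_le_card (face_subset_sup hF)
  have hsupSk : (Sk V m).sup Finset.card = m := by
    apply le_antisymm
    · exact Finset.sup_le (fun s hs => (mem_Sk.1 hs).2)
    · calc m = F.card := hm.trans hFc
        _ ≤ (Sk V m).sup Finset.card := Finset.le_sup (f := Finset.card) (hΔΓ hF)
  have hCM : IsCM k (Sk V m) d := Sk_CM hne hsup hVcard
  refine ⟨Sk V m, Sk_complex V m, ⟨⟨∅, mem_Sk.2 ⟨Finset.empty_subset V, Nat.zero_le m⟩⟩,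
    by rw [hsupSk]; exact hsup⟩, hΔΓ, hCM, ?_⟩
  intro σ hσ i hi
  by_cases hσΔ : σ ∈ Δ
  · obtain ⟨hσV, hσc⟩ := mem_Sk.1 hσ
    by_cases hio : i + (σ.card : ℤ) < d
    · -- below top dimension: use the exact sequence
      apply vanish_shift (show i - 1 + 1 = i by ring)
      refine fragment_II (lk_mono hΔΓ σ) (lk_complex hΔ σ)
        (lk_complex (Sk_complex V m) σ) (i - 1) ?_ ?_
      · exact hCM σ hσ (i - 1 + 1) (by omega)
      · exact hdep σ hσΔ (i - 1) (by omega)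
    · -- above top dimension: no relative faces of cardinality `i + 1`
      apply vanish_of_no_faces
      intro s hs
      have hs1 := (Finset.mem_sdiff.1 hs).1
      rw [lk_Sk hσ] at hs1
      have h2 := (mem_Sk.1 hs1).2
      omega
  · rw [lk_empty hΔ hσΔ, Finset.sdiff_empty]
    exact hCM σ hσ i (by omega)

end Backward

/-- A `d`-dimensional complex `Δ` has a Cohen–Macaulay extender (a `d`-dimensional
Cohen–Macaulay complex `Γ ⊇ Δ` with `(Γ,Δ)` relative Cohen–Macaulay) if and only if
`depth k[Δ] ≥ dim k[Δ] - 1 = d`. -/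
theorem CM_extender_iff_depth (k : Type) [Field k] (d : ℤ)
    (Δ : Finset (Finset ℕ)) (hΔ : IsComplex Δ) (hdim : dimIs Δ d) :
    (∃ Γ : Finset (Finset ℕ), IsComplex Γ ∧ dimIs Γ d ∧ Δ ⊆ Γ ∧
        IsCM k Γ d ∧ RelCM k Γ Δ d) ↔
      DepthGE k Δ d := by
  constructor
  · rintro ⟨Γ, hΓ, _, hsub, hCM, hrel⟩
    exact forward_dir hΔ hΓ hsub hCM hrel
  · exact backward_dir hΔ hdim
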